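/- arXiv:1704.00193 — 2 statements merged into one kernel-verified Lean document; each statement's English description precedes it below -/
import Mathlib

section
/- Let R be a commutative integral domain with field of fractions K, let C be an m×n matrix over K, and let n₀, d ∈ R be coprime (i.e., there exist x, y ∈ R with n₀·x + d·y = 1) with d ≠ 0. Set g = n₀/d ∈ K. If there exist matrices A ∈ R^{n×n} and B ∈ R^{n×m} such that g·I = A + B·C, then there exist matrices A₀ ∈ R^{n×n} and B₀ ∈ R^{n×m} such that d⁻¹·I = A₀ + B₀·C. -/
/-! Bézout gives `d⁻¹ = x · (n₀ / d) + y` in `K`, so `d⁻¹ I = x (A + B C) + y I = (x A + y I) + (x B) C`.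
More generally, the matrices of the form `A₀ + B₀ C` with `A₀, B₀` over `R` form an `R`-submodule
containing `I`, so whenever `c I` is of that form, so is `(r c + s) I` for all `r, s ∈ R`. -/

theorem inv_eq_mul_div_add_of_mul_add_mul_eq_one {K : Type*} [Field K] {a b x y : K}
    (hab : a * x + b * y = 1) (hb : b ≠ 0) : b⁻¹ = x * (a / b) + y := by
  field_simp
  linear_combination -hab

namespace Matrix

variable {R K : Type*} [CommRing R] [CommRing K] [Algebra R K]

theorem map_algebraMap_smul {l m : Type*} (r : R) (M : Matrix l m R) :
    (r • M).map (algebraMap R K) = algebraMap R K r • M.map (algebraMap R K) := by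
  ext i j; simp

theorem exists_map_add_map_mul_eq_smul_one {l m : Type*} [Fintype m] [DecidableEq l]
    {C : Matrix m l K} {c : K} {A : Matrix l l R} {B : Matrix l m R}
    (h : c • (1 : Matrix l l K) = A.map (algebraMap R K) + B.map (algebraMap R K) * C)
    (r s : R) :
    ∃ (A₀ : Matrix l l R) (B₀ : Matrix l m R),
      (algebraMap R K r * c + algebraMap R K s) • (1 : Matrix l l K)
        = A₀.map (algebraMap R K) + B₀.map (algebraMap R K) * C := by
  refine ⟨r • A + s • 1, r • B, ?_⟩
  rw [Matrix.map_add _ (map_add _), map_algebraMap_smul, map_algebraMap_smul, map_algebraMap_smul,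
    Matrix.map_one _ (map_zero _) (map_one _), smul_mul, add_right_comm, ← smul_add, ← h,
    add_smul, smul_smul]

end Matrix

theorem stmt_6_general (R : Type*) [CommRing R]
    (K : Type*) [Field K] [Algebra R K] [IsFractionRing R K]
    (m n : ℕ) (C : Matrix (Fin m) (Fin n) K)
    (n₀ d x y : R) (hco : n₀ * x + d * y = 1) (hd : d ≠ 0)
    (g : K) (hgdef : g = algebraMap R K n₀ / algebraMap R K d)
    (A : Matrix (Fin n) (Fin n) R) (B : Matrix (Fin n) (Fin m) R)
    (h : g • (1 : Matrix (Fin n) (Fin n) K)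
        = A.map (algebraMap R K) + B.map (algebraMap R K) * C) :
    ∃ (A₀ : Matrix (Fin n) (Fin n) R) (B₀ : Matrix (Fin n) (Fin m) R),
      (algebraMap R K d)⁻¹ • (1 : Matrix (Fin n) (Fin n) K)
        = A₀.map (algebraMap R K) + B₀.map (algebraMap R K) * C := by
  have hdK : algebraMap R K d ≠ 0 := (map_ne_zero_iff _ (IsFractionRing.injective R K)).mpr hd
  have hcoK : algebraMap R K n₀ * algebraMap R K x + algebraMap R K d * algebraMap R K y = 1 := by
    simpa only [map_add, map_mul, map_one] using congrArg (algebraMap R K) hco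
  rw [inv_eq_mul_div_add_of_mul_add_mul_eq_one hcoK hdK, ← hgdef]
  exact Matrix.exists_map_add_map_mul_eq_smul_one h x y

theorem stmt_6 (R : Type*) [CommRing R] [IsDomain R]
    (K : Type*) [Field K] [Algebra R K] [IsFractionRing R K]
    (m n : ℕ) (C : Matrix (Fin m) (Fin n) K)
    (n₀ d x y : R) (hco : n₀ * x + d * y = 1) (hd : d ≠ 0)
    (g : K) (hgdef : g = algebraMap R K n₀ / algebraMap R K d)
    (A : Matrix (Fin n) (Fin n) R) (B : Matrix (Fin n) (Fin m) R)
    (h : g • (1 : Matrix (Fin n) (Fin n) K)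
        = A.map (algebraMap R K) + B.map (algebraMap R K) * C) :
    ∃ (A₀ : Matrix (Fin n) (Fin n) R) (B₀ : Matrix (Fin n) (Fin m) R),
      (algebraMap R K d)⁻¹ • (1 : Matrix (Fin n) (Fin n) K)
        = A₀.map (algebraMap R K) + B₀.map (algebraMap R K) * C :=
  stmt_6_general R K m n C n₀ d x y hco hd g hgdef A B h
end

section
/- Let R be a commutative integral domain with field of fractions K, let d ∈ R be nonzero, and suppose the m×n matrix C over K has a right coprime factorization C = N·D⁻¹, i.e., N ∈ R^{m×n}, D ∈ R^{n×n} invertible over K, and there exist X ∈ R^{n×m}, Y ∈ R^{n×n} with X·N + Y·D = I. If there exist A₀ ∈ R^{n×n}, B₀ ∈ R^{n×m} with d⁻¹·I = A₀ + B₀·C, then there exists D₀ ∈ R^{n×n} with D = d·D₀ (i.e., every entry of D is divisible by d). -/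
theorem stmt_7 (R : Type*) [CommRing R] [IsDomain R]
    (K : Type*) [Field K] [Algebra R K] [IsFractionRing R K]
    (m n : ℕ) (C : Matrix (Fin m) (Fin n) K)
    (d : R) (hd : d ≠ 0)
    (N : Matrix (Fin m) (Fin n) R) (D : Matrix (Fin n) (Fin n) R)
    (hdet : D.det ≠ 0)
    (hfact : C = N.map (algebraMap R K) * (D.map (algebraMap R K))⁻¹)
    (X : Matrix (Fin n) (Fin m) R) (Y : Matrix (Fin n) (Fin n) R)
    (hco : X * N + Y * D = 1)
    (A₀ : Matrix (Fin n) (Fin n) R) (B₀ : Matrix (Fin n) (Fin m) R)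
    (h : (algebraMap R K d)⁻¹ • (1 : Matrix (Fin n) (Fin n) K)
        = A₀.map (algebraMap R K) + B₀.map (algebraMap R K) * C) :
    ∃ D₀ : Matrix (Fin n) (Fin n) R, D = d • D₀ := by
  set f := algebraMap R K with hfdef
  have hf : Function.Injective f := IsFractionRing.injective R K
  have hfd : f d ≠ 0 := fun h0 => hd (hf (by simpa using h0))
  have hDdet : IsUnit (D.map f).det := by
    have : (D.map f).det = f D.det := by
      exact (RingHom.map_det f D).symm
    rw [this]
    exact isUnit_iff_ne_zero.mpr (fun h0 => hdet (hf (by simpa using h0)))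
  have hCD : C * D.map f = N.map f := by
    rw [hfact, Matrix.mul_assoc, Matrix.nonsing_inv_mul _ hDdet, Matrix.mul_one]
  have key : (f d)⁻¹ • D.map f
      = A₀.map f * D.map f + B₀.map f * N.map f := by
    have := congrArg (· * D.map f) h
    simpa [Matrix.smul_mul, Matrix.add_mul, Matrix.mul_assoc, hCD] using this
  have key2 : D.map f = (d • (A₀ * D + B₀ * N)).map f := by
    have := congrArg (fun M => (f d) • M) key
    simp only [smul_smul, mul_inv_cancel₀ hfd, one_smul] at this
    rw [this]
    ext i j
    simp [Matrix.mul_apply, Matrix.add_apply, Matrix.smul_apply, Matrix.map_apply,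
      map_sum, map_mul, mul_add, Finset.mul_sum]
  refine ⟨A₀ * D + B₀ * N, ?_⟩
  ext i j
  exact hf (by have := congrFun (congrFun key2 i) j; simpa [mul_add] using this)
end
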